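/- Suppose F : [0,T] × ℝ^{n×n} → ℝ^{n×n} satisfies F(t, Yᵀ)ᵀ = F(t, Y) for all Y, and let S₀ ∈ ℝ^{r×r} be symmetric, Y₀ = U₀S₀U₀ᵀ. Then in the new low-rank integrator L(t) = K(t) for all t, V₁ = U₁, N = M, and the result Y₁ = U₁S₁U₁ᵀ of one step is symmetric. -/

import Mathlib

attribute [local instance] Matrix.frobeniusNormedAddCommGroup Matrix.frobeniusNormedSpace

open Matrix

/-!
Both claims are instances of uniqueness for Lipschitz ODEs. Using `F(t, Yᵀ)ᵀ = F(t, Y)`, the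
L-step becomes `L' = F(t, L U₀ᵀ) U₀`, the K-step equation, and it starts from
`U₀ S₀ᵀ = U₀ S₀ = K(t₀)`; hence `L = K`. For the S-step, transposition commutes with the
vector field `S ↦ U₁ᵀ F(t, U₁ S U₁ᵀ) U₁`, so `S(t)ᵀ` solves the same equation as `S(t)`, from
the same symmetric initial value `M S₀ Mᵀ`; hence `S(t₁)` and `U₁ S(t₁) U₁ᵀ` are symmetric.
-/

section ODE

open Set

variable {E : Type*} [NormedAddCommGroup E] [NormedSpace ℝ E] {v : ℝ → E → E} {K : NNReal}
  {a b : ℝ}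

theorem ODE_solution_unique_of_hasDerivAt (hv : ∀ t, LipschitzWith K (v t)) {f g : ℝ → E}
    (hf : ∀ t ∈ Icc a b, HasDerivAt f (v t (f t)) t)
    (hg : ∀ t ∈ Icc a b, HasDerivAt g (v t (g t)) t) (ha : f a = g a) :
    ∀ t ∈ Icc a b, f t = g t :=
  ODE_solution_unique hv (HasDerivAt.continuousOn hf)
    (fun t ht => (hf t (Ico_subset_Icc_self ht)).hasDerivWithinAt) (HasDerivAt.continuousOn hg)
    (fun t ht => (hg t (Ico_subset_Icc_self ht)).hasDerivWithinAt) ha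

theorem ODE_solution_fixed_of_equivariant (hv : ∀ t, LipschitzWith K (v t)) (σ : E →L[ℝ] E)
    (hσv : ∀ t x, σ (v t x) = v t (σ x)) {f : ℝ → E}
    (hf : ∀ t ∈ Icc a b, HasDerivAt f (v t (f t)) t) (ha : σ (f a) = f a) :
    ∀ t ∈ Icc a b, σ (f t) = f t :=
  ODE_solution_unique_of_hasDerivAt hv (f := σ ∘ f)
    (fun t ht => hσv t (f t) ▸ σ.hasFDerivAt.comp_hasDerivAt t (hf t ht)) hf ha

end ODE

namespace Matrix

variable {l m n : Type*} [Fintype l] [Fintype m] [Fintype n]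

theorem frobenius_lipschitzWith_mul_left (A : Matrix l m ℝ) :
    LipschitzWith ‖A‖₊ (fun X : Matrix m n ℝ => A * X) :=
  LipschitzWith.of_dist_le_mul fun X Y => by
    simpa only [dist_eq_norm, coe_nnnorm, Matrix.mul_sub] using frobenius_norm_mul A (X - Y)

theorem frobenius_lipschitzWith_mul_right (B : Matrix m n ℝ) :
    LipschitzWith ‖B‖₊ (fun X : Matrix l m ℝ => X * B) :=
  LipschitzWith.of_dist_le_mul fun X Y => by
    simpa only [dist_eq_norm, coe_nnnorm, Matrix.sub_mul, mul_comm ‖B‖] using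
      frobenius_norm_mul (X - Y) B

end Matrix

theorem stmt12_general {n r : ℕ} (t₀ t₁ : ℝ) (ht : t₀ ≤ t₁) (Lip : ℝ)
    (F : ℝ → Matrix (Fin n) (Fin n) ℝ → Matrix (Fin n) (Fin n) ℝ)
    (hLip : ∀ t, ∀ Y Y' : Matrix (Fin n) (Fin n) ℝ, ‖F t Y - F t Y'‖ ≤ Lip * ‖Y - Y'‖)
    (hFsym : ∀ t, ∀ Y : Matrix (Fin n) (Fin n) ℝ, (F t Yᵀ)ᵀ = F t Y)
    (U₀ : Matrix (Fin n) (Fin r) ℝ)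
    (S₀ : Matrix (Fin r) (Fin r) ℝ) (hS₀ : S₀ᵀ = S₀)
    -- K-step: K' = F(t, K U₀ᵀ) U₀, K(t₀) = U₀ S₀
    (K : ℝ → Matrix (Fin n) (Fin r) ℝ) (hK0 : K t₀ = U₀ * S₀)
    (hKderiv : ∀ t ∈ Set.Icc t₀ t₁, HasDerivAt K (F t (K t * U₀ᵀ) * U₀) t)
    -- L-step: L' = F(t, U₀ Lᵀ)ᵀ U₀, L(t₀) = U₀ S₀ᵀ
    (Lm : ℝ → Matrix (Fin n) (Fin r) ℝ) (hL0 : Lm t₀ = U₀ * S₀ᵀ)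
    (hLderiv : ∀ t ∈ Set.Icc t₀ t₁, HasDerivAt Lm ((F t (U₀ * (Lm t)ᵀ))ᵀ * U₀) t)
    -- QR of K(t₁): K(t₁) = U₁ R₁; one takes V₁ = U₁ and N = M = U₁ᵀ U₀
    (U₁ : Matrix (Fin n) (Fin r) ℝ)
    -- S-step with V₁ = U₁: S' = U₁ᵀ F(t, U₁ S U₁ᵀ) U₁, S(t₀) = M S₀ Mᵀ
    (S : ℝ → Matrix (Fin r) (Fin r) ℝ)
    (hSinit : S t₀ = (U₁ᵀ * U₀) * S₀ * (U₁ᵀ * U₀)ᵀ)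
    (hSderiv : ∀ t ∈ Set.Icc t₀ t₁, HasDerivAt S (U₁ᵀ * F t (U₁ * S t * U₁ᵀ) * U₁) t) :
    (∀ t ∈ Set.Icc t₀ t₁, Lm t = K t) ∧
      (U₁ * S t₁ * U₁ᵀ)ᵀ = U₁ * S t₁ * U₁ᵀ := by
  have hF : ∀ t, LipschitzWith Lip.toNNReal (F t) := fun t =>
    LipschitzWith.of_dist_le' fun Y Y' => by simpa only [dist_eq_norm] using hLip t Y Y'
  have hFT : ∀ t Y, (F t Y)ᵀ = F t Yᵀ := fun t Y => by simpa using hFsym t Yᵀ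
  have hLK : ∀ t ∈ Set.Icc t₀ t₁, Lm t = K t :=
    ODE_solution_unique_of_hasDerivAt (v := fun t X => F t (X * U₀ᵀ) * U₀)
      (fun t => (frobenius_lipschitzWith_mul_right U₀).comp
        ((hF t).comp (frobenius_lipschitzWith_mul_right U₀ᵀ)))
      (fun t ht => by
        have h := hLderiv t ht
        rwa [hFT, transpose_mul, transpose_transpose] at h) hKderiv
      (by rw [hL0, hK0, hS₀])
  have hSsym : (S t₁)ᵀ = S t₁ :=
    ODE_solution_fixed_of_equivariant (v := fun t X => U₁ᵀ * F t (U₁ * X * U₁ᵀ) * U₁)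
      (fun t => (frobenius_lipschitzWith_mul_right U₁).comp <|
        (frobenius_lipschitzWith_mul_left U₁ᵀ).comp <| (hF t).comp <|
          (frobenius_lipschitzWith_mul_right U₁ᵀ).comp (frobenius_lipschitzWith_mul_left U₁))
      (LinearMap.toContinuousLinearMap (transposeLinearEquiv (Fin r) (Fin r) ℝ ℝ).toLinearMap)
      (fun t X => by simp [transpose_mul, hFT, Matrix.mul_assoc]) hSderiv
      (by simp [hSinit, hS₀, transpose_mul, Matrix.mul_assoc]) t₁ ⟨ht, le_rfl⟩
  refine ⟨hLK, ?_⟩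
  rw [transpose_mul, transpose_mul, transpose_transpose, hSsym, Matrix.mul_assoc]

/-- symmetry preservation of the new low-rank integrator when
`F(t,Yᵀ)ᵀ = F(t,Y)`. -/
theorem stmt12 {n r : ℕ} (t₀ t₁ : ℝ) (ht : t₀ ≤ t₁) (Lip : ℝ)
    (F : ℝ → Matrix (Fin n) (Fin n) ℝ → Matrix (Fin n) (Fin n) ℝ)
    (hLip : ∀ t, ∀ Y Y' : Matrix (Fin n) (Fin n) ℝ, ‖F t Y - F t Y'‖ ≤ Lip * ‖Y - Y'‖)
    (hFsym : ∀ t, ∀ Y : Matrix (Fin n) (Fin n) ℝ, (F t Yᵀ)ᵀ = F t Y)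
    (U₀ : Matrix (Fin n) (Fin r) ℝ) (hU₀ : U₀ᵀ * U₀ = 1)
    (S₀ : Matrix (Fin r) (Fin r) ℝ) (hS₀ : S₀ᵀ = S₀)
    -- K-step: K' = F(t, K U₀ᵀ) U₀, K(t₀) = U₀ S₀
    (K : ℝ → Matrix (Fin n) (Fin r) ℝ) (hK0 : K t₀ = U₀ * S₀)
    (hKderiv : ∀ t ∈ Set.Icc t₀ t₁, HasDerivAt K (F t (K t * U₀ᵀ) * U₀) t)
    (hKcont : ContinuousOn K (Set.Icc t₀ t₁))
    -- L-step: L' = F(t, U₀ Lᵀ)ᵀ U₀, L(t₀) = U₀ S₀ᵀ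
    (Lm : ℝ → Matrix (Fin n) (Fin r) ℝ) (hL0 : Lm t₀ = U₀ * S₀ᵀ)
    (hLderiv : ∀ t ∈ Set.Icc t₀ t₁, HasDerivAt Lm ((F t (U₀ * (Lm t)ᵀ))ᵀ * U₀) t)
    (hLcont : ContinuousOn Lm (Set.Icc t₀ t₁))
    -- QR of K(t₁): K(t₁) = U₁ R₁; one takes V₁ = U₁ and N = M = U₁ᵀ U₀
    (U₁ : Matrix (Fin n) (Fin r) ℝ) (R₁ : Matrix (Fin r) (Fin r) ℝ)
    (hQR : K t₁ = U₁ * R₁) (hU₁ : U₁ᵀ * U₁ = 1)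
    -- S-step with V₁ = U₁: S' = U₁ᵀ F(t, U₁ S U₁ᵀ) U₁, S(t₀) = M S₀ Mᵀ
    (S : ℝ → Matrix (Fin r) (Fin r) ℝ)
    (hSinit : S t₀ = (U₁ᵀ * U₀) * S₀ * (U₁ᵀ * U₀)ᵀ)
    (hSderiv : ∀ t ∈ Set.Icc t₀ t₁, HasDerivAt S (U₁ᵀ * F t (U₁ * S t * U₁ᵀ) * U₁) t) :
    (∀ t ∈ Set.Icc t₀ t₁, Lm t = K t) ∧
      (U₁ * S t₁ * U₁ᵀ)ᵀ = U₁ * S t₁ * U₁ᵀ :=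
  stmt12_general t₀ t₁ ht Lip F hLip hFsym U₀ S₀ hS₀ K hK0 hKderiv Lm hL0 hLderiv U₁ S hSinit
    hSderiv
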